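/- There exists a polynomial map p = (p_1,…,p_n): ℂ → ℂ^n such that for every ζ with |ζ| = 1 and every j = 1,…,n, p_j(ζ) = ζ^{k_0} · Σ_{ℓ=1}^{d} c_ℓ · P_{ℓ,z_j}((1−ζ)V, (1−conj ζ)·conj V). (This is the key fact showing that the disc f₀(ζ) = ((1−ζ)V, g₀(ζ)) admits a k₀-stationary lift for the model M_H: the boundary map ζ ↦ ζ^{k_0} Σ_ℓ c_ℓ ∂ρ_ℓ(f₀(ζ), conj f₀(ζ)) extends holomorphically through the unit disc.) -/

import Mathlib

/-!
On the unit circle `conj ζ = ζ⁻¹`, and `ζ (1 - ζ⁻¹) = ζ - 1`. Hence `ζ ^ k₀` times the monomial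
`z^I w^J` evaluated at `((1 - ζ) V, (1 - conj ζ) conj V)` equals
`ζ ^ (k₀ - |J|) (1 - ζ) ^ |I| (ζ - 1) ^ |J| V^I (conj V)^J`, which is a polynomial in `ζ` as soon as
`|J| ≤ k₀`. Differentiating in `z_j` does not change `|J|`, and `|J| = D_ℓ - |I| ≤ k_ℓ ≤ k₀`.
-/

open ComplexConjugate

theorem MvPolynomial.add_single_mem_support_of_mem_support_pderiv {σ R : Type*} [CommSemiring R]
    {i : σ} {p : MvPolynomial σ R} {μ : σ →₀ ℕ} (h : μ ∈ (pderiv i p).support) :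
    μ + Finsupp.single i 1 ∈ p.support := by
  rw [mem_support_iff, coeff_pderiv] at h
  exact mem_support_iff.2 (left_ne_zero_of_mul h)

theorem MvPolynomial.sum_inr_le_of_mem_support_pderiv_inl {σ τ R : Type*} [CommSemiring R]
    [Fintype τ] {Q : MvPolynomial (σ ⊕ τ) R} {m : ℕ}
    (hQ : ∀ μ ∈ Q.support, ∑ i, μ (Sum.inr i) ≤ m) (j : σ) :
    ∀ μ ∈ (pderiv (Sum.inl j) Q).support, ∑ i, μ (Sum.inr i) ≤ m := by
  intro μ hμ
  simpa using hQ _ (add_single_mem_support_of_mem_support_pderiv hμ)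

theorem pow_mul_one_sub_inv_pow {K : Type*} [Field K] {ζ : K} (hζ : ζ ≠ 0) {m b : ℕ}
    (hb : b ≤ m) : ζ ^ m * (1 - ζ⁻¹) ^ b = ζ ^ (m - b) * (ζ - 1) ^ b := by
  rw [← Nat.sub_add_cancel hb, pow_add, mul_assoc, ← mul_pow, mul_one_sub, mul_inv_cancel₀ hζ,
    Nat.add_sub_cancel]

theorem MvPolynomial.exists_polynomial_eval_eq_pow_mul_eval_one_sub_inv
    {K σ τ : Type*} [Field K] [Fintype σ] [Fintype τ] (Q : MvPolynomial (σ ⊕ τ) K)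
    (a : σ → K) (b : τ → K) {m : ℕ} (hQ : ∀ μ ∈ Q.support, ∑ i, μ (Sum.inr i) ≤ m) :
    ∃ p : Polynomial K, ∀ ζ ≠ 0, p.eval ζ =
      ζ ^ m * eval (Sum.elim (fun q => (1 - ζ) * a q) (fun q => (1 - ζ⁻¹) * b q)) Q := by
  refine ⟨∑ μ ∈ Q.support,
    Polynomial.C (coeff μ Q * (∏ i, a i ^ μ (Sum.inl i)) * ∏ i, b i ^ μ (Sum.inr i)) *
      (1 - Polynomial.X) ^ (∑ i, μ (Sum.inl i)) * Polynomial.X ^ (m - ∑ i, μ (Sum.inr i)) *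
      (Polynomial.X - 1) ^ (∑ i, μ (Sum.inr i)), fun ζ hζ => ?_⟩
  rw [eval_eq', Finset.mul_sum, Polynomial.eval_finsetSum]
  refine Finset.sum_congr rfl fun μ hμ => ?_
  simp only [Fintype.prod_sum_type, Sum.elim_inl, Sum.elim_inr, mul_pow, Finset.prod_mul_distrib,
    Finset.prod_pow_eq_pow_sum, Polynomial.eval_mul, Polynomial.eval_pow, Polynomial.eval_C,
    Polynomial.eval_X, Polynomial.eval_sub, Polynomial.eval_one]
  rw [mul_assoc _ (ζ ^ _), ← pow_mul_one_sub_inv_pow hζ (hQ μ hμ)]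
  ring

theorem stmt10_general
    (n d : ℕ)
    (D k : Fin d → ℕ) (k0 : ℕ)
    (hk0 : ∀ ℓ, k ℓ ≤ k0)
    (P : Fin d → MvPolynomial (Fin n ⊕ Fin n) ℂ)
    (hsupp : ∀ ℓ, ∀ μ ∈ (P ℓ).support,
      ((∑ i, μ (Sum.inl i)) + (∑ i, μ (Sum.inr i)) = D ℓ ∧
        D ℓ - k ℓ ≤ ∑ i, μ (Sum.inl i)) ∧ (∑ i, μ (Sum.inl i)) ≤ k ℓ)
    (c : Fin d → ℝ) (V : Fin n → ℂ) :
    ∃ p : Fin n → Polynomial ℂ,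
      ∀ ζ : ℂ, ‖ζ‖ = 1 → ∀ j : Fin n,
        (p j).eval ζ =
          ζ ^ k0 * ∑ ℓ, (c ℓ : ℂ) *
            MvPolynomial.eval
              (Sum.elim (fun q => (1 - ζ) * V q)
                (fun q => (1 - conj ζ) * conj (V q)))
              (MvPolynomial.pderiv (Sum.inl j) (P ℓ)) := by
  have hdeg : ∀ ℓ, ∀ μ ∈ (P ℓ).support, ∑ i, μ (Sum.inr i) ≤ k0 := fun ℓ μ hμ => by
    have := hsupp ℓ μ hμ
    have := hk0 ℓ
    omega
  choose q hq using fun ℓ j =>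
    MvPolynomial.exists_polynomial_eval_eq_pow_mul_eval_one_sub_inv
      (MvPolynomial.pderiv (Sum.inl j) (P ℓ)) V (fun q => conj (V q))
      (MvPolynomial.sum_inr_le_of_mem_support_pderiv_inl (hdeg ℓ) j)
  refine ⟨fun j => ∑ ℓ, Polynomial.C (c ℓ : ℂ) * q ℓ j, fun ζ hζ j => ?_⟩
  have hζ0 : ζ ≠ 0 := norm_ne_zero_iff.1 (hζ ▸ one_ne_zero)
  simp only [Polynomial.eval_finsetSum, Polynomial.eval_mul, Polynomial.eval_C, hq _ _ ζ hζ0,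
    Complex.inv_eq_conj hζ, Finset.mul_sum]
  exact Finset.sum_congr rfl fun ℓ _ => by ring

theorem stmt10
    (n d : ℕ) (hn : 1 ≤ n) (hd : 1 ≤ d)
    (D k : Fin d → ℕ) (k0 : ℕ)
    (hD1 : 2 ≤ D ⟨0, hd⟩) (hD1le : ∀ ℓ, D ⟨0, hd⟩ ≤ D ℓ)
    (hklow : ∀ ℓ, D ℓ ≤ 2 * k ℓ) (hkhigh : ∀ ℓ, k ℓ ≤ D ℓ - 1)
    (hk0 : ∀ ℓ, k ℓ ≤ k0) (hk0mem : ∃ ℓ, k ℓ = k0)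
    (P : Fin d → MvPolynomial (Fin n ⊕ Fin n) ℂ)
    (hsupp : ∀ ℓ, ∀ μ ∈ (P ℓ).support,
      ((∑ i, μ (Sum.inl i)) + (∑ i, μ (Sum.inr i)) = D ℓ ∧
        D ℓ - k ℓ ≤ ∑ i, μ (Sum.inl i)) ∧ (∑ i, μ (Sum.inl i)) ≤ k ℓ)
    (hreal : ∀ ℓ μ, MvPolynomial.coeff μ (P ℓ) =
      conj (MvPolynomial.coeff
        (Finsupp.equivMapDomain (Equiv.sumComm (Fin n) (Fin n)) μ) (P ℓ)))
    (c : Fin d → ℝ) (V : Fin n → ℂ) (hV : V ≠ 0) :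
    ∃ p : Fin n → Polynomial ℂ,
      ∀ ζ : ℂ, ‖ζ‖ = 1 → ∀ j : Fin n,
        (p j).eval ζ =
          ζ ^ k0 * ∑ ℓ, (c ℓ : ℂ) *
            MvPolynomial.eval
              (Sum.elim (fun q => (1 - ζ) * V q)
                (fun q => (1 - conj ζ) * conj (V q)))
              (MvPolynomial.pderiv (Sum.inl j) (P ℓ)) :=
  stmt10_general n d D k k0 hk0 P hsupp c V
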